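/- arXiv:quant-ph/0208130 — 5 statements merged into one kernel-verified Lean document; each statement's English description precedes it below -/
import Mathlib

section
/- Let m ≥ 1, let τ ∈ ℂ, and let α : Fin m → ℂ. Let U be an n×n complex unitary matrix whose minimal polynomial over ℂ is X^m − τ, and suppose that the matrix V := Σ_{i=0}^{m−1} α_i U^i is unitary. Then the τ-twisted circulant matrix C(τ, α) is a unitary m×m matrix. -/
open Matrix Polynomial

/-- The τ-twisted circulant matrix: entry (k, j) equals τ·α_{(j−k) mod m} if j < k,
and α_{(j−k) mod m} if j ≥ k (Fin subtraction is subtraction mod m). -/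
def twistedCirculant (m : ℕ) (τ : ℂ) (α : Fin m → ℂ) : Matrix (Fin m) (Fin m) ℂ :=
  fun k j => if (j : ℕ) < (k : ℕ) then τ * α (j - k) else α (j - k)

/-!
The map `c ↦ ∑ cᵢ Uⁱ` identifies `ℂ^m` with `ℂ[U] ≅ ℂ[X]/(X^m − τ)`; it is injective because
the minimal polynomial of `U` has degree `m`. In these coordinates `C(τ, γ)` is the matrix of
multiplication by `∑ γᵢ Uⁱ` acting on row vectors: the index `k + i` wraps around modulo `m`
exactly when `U^(k+i)` is reduced by `U^m = τ`. As `U` is unitary, `|τ| = 1` and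
`(Uᴴ)^(m−j) = τ̄ U^j`, so `Vᴴ` lies in `ℂ[U]` too, and its coefficient vector is the one whose
twisted circulant is `C(τ, α)ᴴ`. Hence `C(τ, α)ᴴ C(τ, α)` represents multiplication by
`Vᴴ V = 1`.
-/

section PowCombination

variable {A : Type*} [Ring A] [Algebra ℂ A] {m : ℕ} {u : A} {τ : ℂ}

def powCombination (m : ℕ) (u : A) : (Fin m → ℂ) →ₗ[ℂ] A :=
  Fintype.linearCombination ℂ fun i : Fin m => u ^ (i : ℕ)

theorem powCombination_apply (c : Fin m → ℂ) :
    powCombination m u c = ∑ i : Fin m, c i • u ^ (i : ℕ) :=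
  Fintype.linearCombination_apply _ _ _

theorem powCombination_injective (hu : (minpoly ℂ u).natDegree = m) :
    Function.Injective (powCombination m u) := by
  subst hu
  exact (linearIndependent_pow u).fintypeLinearCombination_injective

theorem pow_eq_smul_one_of_minpoly_eq (h : minpoly ℂ u = X ^ m - C τ) : u ^ m = τ • 1 := by
  have := minpoly.aeval ℂ u
  rwa [h, map_sub, aeval_X_pow, aeval_C, sub_eq_zero, Algebra.algebraMap_eq_smul_one] at this

theorem twistedCirculant_add_smul_pow [NeZero m] (hu : u ^ m = τ • 1) (γ : Fin m → ℂ)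
    (k i : Fin m) :
    twistedCirculant m τ γ k (k + i) • u ^ ((k + i : Fin m) : ℕ) =
      γ i • (u ^ (k : ℕ) * u ^ (i : ℕ)) := by
  have hval := Fin.val_add_eq_ite k i
  rw [twistedCirculant, add_sub_cancel_left, ← pow_add]
  by_cases hki : m ≤ (k : ℕ) + i
  · have hwrap : u ^ ((k : ℕ) + i) = τ • u ^ ((k : ℕ) + i - m) := by
      rw [← Nat.sub_add_cancel hki, pow_add, hu, mul_smul_one, Nat.add_sub_cancel]
    rw [if_pos hki] at hval
    rw [if_pos (by omega), hval, hwrap, smul_smul, mul_comm]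
  · rw [if_neg hki] at hval
    rw [if_neg (by omega), hval]

theorem powCombination_vecMul_twistedCirculant [NeZero m] (hu : u ^ m = τ • 1)
    (δ γ : Fin m → ℂ) :
    powCombination m u (δ ᵥ* twistedCirculant m τ γ) =
      powCombination m u δ * powCombination m u γ := by
  simp only [powCombination_apply, vecMul, dotProduct, Finset.sum_smul, Fintype.sum_mul_sum,
    smul_mul_smul_comm]
  rw [Finset.sum_comm]
  refine Fintype.sum_congr _ _ fun k => ?_
  rw [← Equiv.sum_comp (Equiv.addLeft k)]
  refine Fintype.sum_congr _ _ fun i => ?_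
  rw [Equiv.coe_addLeft, mul_smul, twistedCirculant_add_smul_pow hu, smul_smul]

end PowCombination

section Adjoint

variable {m : ℕ} {τ : ℂ}

def adjointCoeffs [NeZero m] (τ : ℂ) (α : Fin m → ℂ) : Fin m → ℂ :=
  fun j => if j = 0 then star (α 0) else star τ * star (α (-j))

theorem conjTranspose_twistedCirculant [NeZero m] (hτ : star τ * τ = 1) (α : Fin m → ℂ) :
    (twistedCirculant m τ α)ᴴ = twistedCirculant m τ (adjointCoeffs τ α) := by
  ext k j
  simp only [conjTranspose_apply, twistedCirculant, adjointCoeffs, neg_sub]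
  rcases lt_trichotomy (j : ℕ) k with hjk | hjk | hjk
  · have hne : j - k ≠ 0 := sub_ne_zero.2 (Fin.ne_of_lt hjk)
    rw [if_neg (by omega), if_pos hjk, if_neg hne, ← mul_assoc, mul_comm τ, hτ, one_mul]
  · obtain rfl := Fin.ext hjk
    simp
  · have hne : j - k ≠ 0 := sub_ne_zero.2 (Fin.ne_of_gt hjk)
    rw [if_pos hjk, if_neg (by omega), if_neg hne, star_mul', mul_comm]

variable {A : Type*} [Ring A] [StarRing A] [Algebra ℂ A] {u : A}

theorem star_mul_self_eq_one_of_pow_eq_smul_one [StarModule ℂ A] [Nontrivial A]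
    (hu : u ∈ unitary A) (hum : u ^ m = τ • 1) : star τ * τ = 1 := by
  have h := Unitary.star_mul_self_of_mem (pow_mem hu m)
  rw [hum, star_smul, star_one, smul_mul_smul_comm, one_mul, ← Algebra.algebraMap_eq_smul_one,
    ← map_one (algebraMap ℂ A)] at h
  exact (algebraMap ℂ A).injective h

theorem star_pow_sub_eq_smul_pow (hu : u ∈ unitary A) (hum : u ^ m = τ • 1)
    (hτ : star τ * τ = 1) {j : ℕ} (hj : j ≤ m) : star u ^ (m - j) = star τ • u ^ j := by
  have h : τ • star u ^ (m - j) = u ^ j :=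
    calc τ • star u ^ (m - j) = star u ^ (m - j) * (u ^ (m - j) * u ^ j) := by
          rw [← pow_add, Nat.sub_add_cancel hj, hum, mul_smul_one]
      _ = u ^ j := by
          rw [← mul_assoc, ← star_pow, Unitary.star_mul_self_of_mem (pow_mem hu _), one_mul]
  rw [← h, smul_smul, hτ, one_smul]

theorem star_powCombination [StarModule ℂ A] [NeZero m] (hu : u ∈ unitary A)
    (hum : u ^ m = τ • 1) (hτ : star τ * τ = 1) (α : Fin m → ℂ) :
    star (powCombination m u α) = powCombination m u (adjointCoeffs τ α) := by
  simp only [powCombination_apply, star_sum, star_smul, star_pow]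
  rw [← Equiv.sum_comp (Equiv.neg (Fin m))]
  refine Fintype.sum_congr _ _ fun j => ?_
  rcases eq_or_ne j 0 with rfl | hj
  · simp [adjointCoeffs]
  · have hj' : (j : ℕ) ≠ 0 := Fin.val_ne_of_ne hj
    have hval : ((-j : Fin m) : ℕ) = m - j := by
      rw [Fin.val_neg', Nat.mod_eq_of_lt (by omega)]
    rw [Equiv.neg_apply, hval, star_pow_sub_eq_smul_pow hu hum hτ j.isLt.le, smul_smul,
      adjointCoeffs, if_neg hj, mul_comm]

theorem conjTranspose_twistedCirculant_mul_self [StarModule ℂ A] [Nontrivial A] [NeZero m]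
    (hu : u ∈ unitary A) (hum : u ^ m = τ • 1) (hinj : Function.Injective (powCombination m u))
    {α : Fin m → ℂ} (hα : powCombination m u α ∈ unitary A) :
    (twistedCirculant m τ α)ᴴ * twistedCirculant m τ α = 1 := by
  have hτ := star_mul_self_eq_one_of_pow_eq_smul_one hu hum
  refine ext_iff_vecMul.2 fun δ => hinj ?_
  rw [vecMul_one, ← vecMul_vecMul, powCombination_vecMul_twistedCirculant hum,
    conjTranspose_twistedCirculant hτ, powCombination_vecMul_twistedCirculant hum,
    ← star_powCombination hu hum hτ, mul_assoc, Unitary.star_mul_self_of_mem hα, mul_one]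

end Adjoint

theorem stmt0 {n m : ℕ} (hm : 1 ≤ m) (τ : ℂ) (α : Fin m → ℂ)
    (U : Matrix (Fin n) (Fin n) ℂ)
    (hU : U * Uᴴ = 1 ∧ Uᴴ * U = 1)
    (hmin : minpoly ℂ U = X ^ m - Polynomial.C τ)
    (V : Matrix (Fin n) (Fin n) ℂ)
    (hV : V = ∑ i : Fin m, α i • U ^ (i : ℕ))
    (hVunitary : V * Vᴴ = 1 ∧ Vᴴ * V = 1) :
    twistedCirculant m τ α * (twistedCirculant m τ α)ᴴ = 1 ∧
      (twistedCirculant m τ α)ᴴ * twistedCirculant m τ α = 1 := by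
  have : NeZero m := ⟨by omega⟩
  have hdeg : (minpoly ℂ U).natDegree = m := by rw [hmin, natDegree_X_pow_sub_C]
  have : Nontrivial (Matrix (Fin n) (Fin n) ℂ) := by
    refine not_subsingleton_iff_nontrivial.1 fun _ => ?_
    rw [minpoly.subsingleton, natDegree_one] at hdeg
    omega
  have hUu : U ∈ unitary (Matrix (Fin n) (Fin n) ℂ) := Unitary.mem_iff.2 ⟨hU.2, hU.1⟩
  have hVu : powCombination m U α ∈ unitary (Matrix (Fin n) (Fin n) ℂ) := by
    rw [powCombination_apply, ← hV]
    exact Unitary.mem_iff.2 ⟨hVunitary.2, hVunitary.1⟩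
  have key := conjTranspose_twistedCirculant_mul_self hUu (pow_eq_smul_one_of_minpoly_eq hmin)
    (powCombination_injective hdeg) hVu
  exact ⟨mul_eq_one_comm.2 key, key⟩
end

section
/- Let m ≥ 1, let U be an n×n complex matrix, and let g : Fin m → ℂ satisfy U^m = Σ_{i=0}^{m−1} g_i U^i. Let P be the m×m companion matrix with entry 1 in position (j, j+1) for 0 ≤ j ≤ m−2 and with last row (g_0, g_1, …, g_{m−1}). Then for every α : Fin m → ℂ and every natural number k, U^k · (Σ_{i=0}^{m−1} α_i U^i) = Σ_{i=0}^{m−1} (α·P^k)_i · U^i. -/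
open Matrix

/-- The companion matrix with entry 1 at (j, j+1) for 0 ≤ j ≤ m−2 and last row
(g 0, g 1, …, g (m−1)). -/
def companionOf (m : ℕ) (g : Fin m → ℂ) : Matrix (Fin m) (Fin m) ℂ :=
  fun j i =>
    if (j : ℕ) = m - 1 then g i
    else if (i : ℕ) = (j : ℕ) + 1 then 1
    else 0

theorem stmt3 {n m : ℕ} (hm : 1 ≤ m)
    (U : Matrix (Fin n) (Fin n) ℂ) (g : Fin m → ℂ)
    (hg : U ^ m = ∑ i : Fin m, g i • U ^ (i : ℕ)) :
    ∀ (α : Fin m → ℂ) (k : ℕ),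
      U ^ k * (∑ i : Fin m, α i • U ^ (i : ℕ)) =
        ∑ i : Fin m, (Matrix.vecMul α (companionOf m g ^ k)) i • U ^ (i : ℕ) := by
  have key : ∀ β : Fin m → ℂ,
      U * (∑ i : Fin m, β i • U ^ (i : ℕ)) =
        ∑ i : Fin m, (Matrix.vecMul β (companionOf m g)) i • U ^ (i : ℕ) := by
    intro β
    have lhs : U * (∑ i : Fin m, β i • U ^ (i : ℕ)) =
        ∑ j : Fin m, β j •
          (if (j : ℕ) = m - 1 then ∑ i : Fin m, g i • U ^ (i : ℕ)
           else U ^ ((j : ℕ) + 1)) := by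
      rw [Finset.mul_sum]
      refine Finset.sum_congr rfl fun j _ => ?_
      rw [Matrix.mul_smul]
      congr 1
      by_cases h : (j : ℕ) = m - 1
      · rw [if_pos h, ← hg, ← pow_succ']
        congr 1
        omega
      · rw [if_neg h, ← pow_succ']
    have rhs : ∑ i : Fin m, (Matrix.vecMul β (companionOf m g)) i • U ^ (i : ℕ) =
        ∑ j : Fin m, β j •
          (if (j : ℕ) = m - 1 then ∑ i : Fin m, g i • U ^ (i : ℕ)
           else U ^ ((j : ℕ) + 1)) := by
      simp only [Matrix.vecMul, dotProduct, Finset.sum_smul]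
      rw [Finset.sum_comm]
      refine Finset.sum_congr rfl fun j _ => ?_
      by_cases h : (j : ℕ) = m - 1
      · rw [if_pos h, Finset.smul_sum]
        refine Finset.sum_congr rfl fun i _ => ?_
        rw [smul_smul]
        simp [companionOf, h]
      · rw [if_neg h]
        simp only [companionOf, h, if_neg, not_false_iff]
        have hj : (j : ℕ) + 1 < m := by
          omega
        rw [Finset.sum_eq_single (⟨(j : ℕ) + 1, hj⟩ : Fin m)]
        · simp
        · intro i _ hi
          have : ¬ ((i : ℕ) = (j : ℕ) + 1) := by
            intro hc
            apply hi
            exact Fin.ext hc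
          simp [this]
        · simp
    rw [lhs, rhs]
  intro α k
  induction k with
  | zero => simp
  | succ k ih =>
    rw [pow_succ', mul_assoc, ih, key, pow_succ, ← Matrix.vecMul_vecMul]
end

section
/- Let U be an n×n complex unitary matrix whose minimal polynomial over ℂ equals X^m − g(X), where g is a polynomial with deg g < m and g is not constant (deg g ≥ 1). Then Σ_{i=0}^{m−1} |g_i|² > 1, where g_i denotes the coefficient of X^i in g. Consequently, there is no unitary m×m complex matrix whose 0-th row equals (g_0, g_1, …, g_{m−1}). -/
/-!
The eigenvalues of a unitary matrix lie on the unit circle, and the constant coefficient of the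
monic minimal polynomial `X ^ m - g` is, up to sign, the product of its roots; hence `‖g₀‖ = 1`.
Since `g` is not constant, its leading coefficient is a second nonzero term among `g₀, …, g_{m-1}`,
so their squared norms sum to more than `1`, whereas every row of a unitary matrix has unit norm.
-/

open Matrix Polynomial

namespace Polynomial

variable {K : Type*} [NormedField K] {p : K[X]}

theorem norm_coeff_zero_eq_one_of_splits (hsplit : p.Splits) (hmonic : p.Monic)
    (hroots : ∀ z ∈ p.roots, ‖z‖ = 1) : ‖p.coeff 0‖ = 1 := by
  rw [hsplit.coeff_zero_eq_prod_roots_of_monic hmonic, norm_mul, norm_pow, norm_neg, norm_one,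
    one_pow, one_mul, ← normHom_apply, map_multiset_prod]
  exact Multiset.prod_eq_one fun x hx => by
    obtain ⟨z, hz, rfl⟩ := Multiset.mem_map.1 hx
    exact hroots z hz

theorem one_lt_sum_range_norm_coeff_sq {m : ℕ} (h0 : ‖p.coeff 0‖ = 1) (hpos : 1 ≤ p.natDegree)
    (hm : p.natDegree < m) : 1 < ∑ i ∈ Finset.range m, ‖p.coeff i‖ ^ 2 := by
  have hlead : 0 < ‖p.leadingCoeff‖ ^ 2 := by
    have hp : p ≠ 0 := by rintro rfl; simp at hpos
    exact pow_pos (norm_pos_iff.2 (leadingCoeff_ne_zero.2 hp)) 2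
  calc 1 < ∑ i ∈ {0, p.natDegree}, ‖p.coeff i‖ ^ 2 := by
        rw [Finset.sum_pair (by omega), h0]; simpa using hlead
    _ ≤ ∑ i ∈ Finset.range m, ‖p.coeff i‖ ^ 2 := by
        refine Finset.sum_le_sum_of_subset_of_nonneg (fun i hi => ?_) fun i _ _ => by positivity
        simp only [Finset.mem_insert, Finset.mem_singleton, Finset.mem_range] at hi ⊢
        omega

end Polynomial

namespace Matrix

variable {ι 𝕜 : Type*} [Fintype ι] [DecidableEq ι] [RCLike 𝕜] {U : Matrix ι ι 𝕜}

theorem sum_norm_sq_row_eq_one_of_mem_unitaryGroup (hU : U ∈ unitaryGroup ι 𝕜) (i : ι) :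
    ∑ j, ‖U i j‖ ^ 2 = 1 := by
  have hdiag : (U * Uᴴ) i i = 1 := by
    rw [← star_eq_conjTranspose, Unitary.mul_star_self_of_mem hU, one_apply_eq]
  simp only [mul_apply, conjTranspose_apply, ← starRingEnd_apply, RCLike.mul_conj] at hdiag
  exact_mod_cast hdiag

open scoped Matrix.Norms.L2Operator in
theorem norm_eq_one_of_isRoot_minpoly_of_mem_unitaryGroup (hU : U ∈ unitaryGroup ι 𝕜) {z : 𝕜}
    (hz : (minpoly 𝕜 U).IsRoot z) : ‖z‖ = 1 :=
  spectrum.norm_eq_one_of_unitary hU <|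
    mem_spectrum_of_isRoot_charpoly (hz.dvd (minpoly_dvd_charpoly U))

theorem norm_coeff_zero_minpoly_of_mem_unitaryGroup {U : Matrix ι ι ℂ}
    (hU : U ∈ unitaryGroup ι ℂ) : ‖(minpoly ℂ U).coeff 0‖ = 1 :=
  norm_coeff_zero_eq_one_of_splits (IsAlgClosed.splits _)
    (minpoly.monic (Algebra.IsIntegral.isIntegral U)) fun _ hz =>
      norm_eq_one_of_isRoot_minpoly_of_mem_unitaryGroup hU (isRoot_of_mem_roots hz)

end Matrix

theorem stmt7 {n m : ℕ}
    (U : Matrix (Fin n) (Fin n) ℂ)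
    (hU : U * Uᴴ = 1 ∧ Uᴴ * U = 1)
    (g : Polynomial ℂ)
    (hdeg : g.natDegree < m)
    (hnc : 1 ≤ g.natDegree)
    (hmin : minpoly ℂ U = X ^ m - g) :
    (1 < ∑ i ∈ Finset.range m, ‖g.coeff i‖ ^ 2) ∧
    ¬ ∃ W : Matrix (Fin m) (Fin m) ℂ,
        (W * Wᴴ = 1 ∧ Wᴴ * W = 1) ∧
        ∀ i : Fin m, W ⟨0, by omega⟩ i = g.coeff (i : ℕ) := by
  have hg0 : ‖g.coeff 0‖ = 1 := by
    have h := norm_coeff_zero_minpoly_of_mem_unitaryGroup (mem_unitaryGroup_iff.2 hU.1)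
    rwa [hmin, coeff_sub, coeff_X_pow, if_neg (by omega), zero_sub, norm_neg] at h
  have hsum := one_lt_sum_range_norm_coeff_sq hg0 hnc hdeg
  refine ⟨hsum, ?_⟩
  rintro ⟨W, ⟨hW, -⟩, hrow⟩
  have hrow_norm :=
    sum_norm_sq_row_eq_one_of_mem_unitaryGroup (mem_unitaryGroup_iff.2 hW) ⟨0, by omega⟩
  simp only [hrow, Fin.sum_univ_eq_sum_range (fun i => ‖g.coeff i‖ ^ 2)] at hrow_norm
  exact hsum.ne' hrow_norm
end

section
/- For every natural number n ≥ 3, the minimal polynomial over ℂ of the 2^n-point discrete Fourier transform matrix F_{2^n} equals X⁴ − 1. -/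
open Matrix Polynomial

/-- The N-point discrete Fourier transform matrix, with entries
N^{−1/2}·exp(−2πi·kℓ/N). -/
noncomputable def dft (N : ℕ) : Matrix (Fin N) (Fin N) ℂ :=
  fun k l =>
    ((Real.sqrt N : ℝ) : ℂ)⁻¹ *
      Complex.exp (-(2 * Real.pi * Complex.I * (k : ℕ) * (l : ℕ)) / N)

/-!
The square of `F = dft N` is the permutation matrix of `k ↦ -k`, so `F⁴ = 1` and the minimal
polynomial divides `X⁴ - 1 = ∏_{μ⁴ = 1} (X - μ)`. A fourth root of unity `μ` is a root of the
minimal polynomial as soon as the cofactor `F³ + μF² + μ²F + μ³` of `X - μ` does not vanish at `F`.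
Its `(1, -1)` entry is `μ + F₁₁ + μ² F₁,₋₁`, and every entry of `F` has modulus `N^{-1/2} < 1/2`
once `N ≥ 5`, so this entry is nonzero.
-/

section minpoly

variable {K A : Type*} [Field K] [Ring A] [Algebra K A] {x : A}

theorem minpoly_isRoot_of_dvd_of_aeval_ne_zero {μ : K} {q : K[X]}
    (hdvd : minpoly K x ∣ (X - C μ) * q) (hq : aeval x q ≠ 0) : (minpoly K x).IsRoot μ := by
  by_contra hμ
  have hcop : IsCoprime (X - C μ) (minpoly K x) :=
    (irreducible_X_sub_C μ).coprime_iff_not_dvd.mpr (mt dvd_iff_isRoot.mp hμ)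
  obtain ⟨r, rfl⟩ := hcop.symm.dvd_of_dvd_mul_left hdvd
  exact hq (by rw [map_mul, minpoly.aeval, zero_mul])

theorem minpoly_eq_X_pow_sub_one {n : ℕ} (hn : 0 < n) {ζ : K} (hζ : IsPrimitiveRoot ζ n)
    (hx : x ^ n = 1) (hroots : ∀ μ ∈ nthRootsFinset n (1 : K), (minpoly K x).IsRoot μ) :
    minpoly K x = X ^ n - 1 := by
  have hmonic : (X ^ n - 1 : K[X]).Monic := monic_X_pow_sub_C 1 hn.ne'
  have hann : aeval x (X ^ n - 1 : K[X]) = 0 := by simp [hx]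
  refine eq_of_monic_of_associated (minpoly.monic ⟨_, hmonic, hann⟩) hmonic
    (associated_of_dvd_dvd (minpoly.dvd K x hann) ?_)
  rw [X_pow_sub_one_eq_prod hn hζ]
  exact Finset.prod_dvd_of_coprime
    (pairwise_coprime_X_sub_C Function.injective_id |>.set_pairwise _)
    fun μ hμ => dvd_iff_isRoot.mpr (hroots μ hμ)

theorem minpoly_eq_X_pow_four_sub_one {ζ : K} (hζ : IsPrimitiveRoot ζ 4) (hx : x ^ 4 = 1)
    (hcubic : ∀ μ : K, μ ^ 4 = 1 → x ^ 3 + μ • x ^ 2 + μ ^ 2 • x + μ ^ 3 • 1 ≠ 0) :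
    minpoly K x = X ^ 4 - 1 := by
  refine minpoly_eq_X_pow_sub_one four_pos hζ hx fun μ hμ => ?_
  rw [mem_nthRootsFinset four_pos] at hμ
  set q : K[X] := X ^ 3 + C μ * X ^ 2 + C (μ ^ 2) * X + C (μ ^ 3)
  refine minpoly_isRoot_of_dvd_of_aeval_ne_zero (q := q) (minpoly.dvd K x ?_) ?_
  · have hfactor : (X - C μ) * q = X ^ 4 - C (μ ^ 4) := by
      simp only [q, map_pow]; ring
    rw [hfactor, hμ, C_1, map_sub, map_pow, aeval_X, hx, map_one, sub_self]
  · simpa [q, Algebra.smul_def] using hcubic μ hμ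

end minpoly

theorem IsPrimitiveRoot.geom_sum_pow_eq_ite {K : Type*} [Field K] {ω : K} {N : ℕ}
    (hω : IsPrimitiveRoot ω N) (m : ℕ) :
    ∑ j ∈ Finset.range N, (ω ^ m) ^ j = if N ∣ m then (N : K) else 0 := by
  split_ifs with hm
  · simp [(hω.pow_eq_one_iff_dvd m).mpr hm]
  · rw [geom_sum_eq (mt (hω.pow_eq_one_iff_dvd m).mp hm), ← pow_mul, mul_comm, pow_mul,
      hω.pow_eq_one, one_pow, sub_self, zero_div]

open Real Complex

section dft

variable {N : ℕ}

theorem norm_dft_apply (k l : Fin N) : ‖dft N k l‖ = (√N)⁻¹ := by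
  have : (-(2 * π * I * (k : ℕ) * (l : ℕ)) / N).re = 0 := by
    simp [Complex.div_re]
  simp [dft, Complex.norm_exp, this]

theorem dft_apply_eq_pow (k l : Fin N) :
    dft N k l = ((√N : ℝ) : ℂ)⁻¹ * exp (-(2 * π * I / N)) ^ ((k : ℕ) * l) := by
  rw [dft, ← Complex.exp_nat_mul]
  congr 2
  push_cast
  ring

theorem isPrimitiveRoot_exp_neg [NeZero N] : IsPrimitiveRoot (exp (-(2 * π * I / N))) N := by
  rw [Complex.exp_neg]
  exact (Complex.isPrimitiveRoot_exp N (NeZero.ne N)).inv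

theorem dft_sq [NeZero N] : dft N ^ 2 = (Equiv.neg (Fin N)).permMatrix ℂ := by
  have hscale : ((√N : ℝ) : ℂ)⁻¹ ^ 2 * N = 1 := by
    rw [← ofReal_inv, ← ofReal_pow, inv_pow, Real.sq_sqrt (Nat.cast_nonneg N)]
    push_cast
    exact inv_mul_cancel₀ (Nat.cast_ne_zero.mpr (NeZero.ne N))
  ext k l
  rw [sq]
  have hsum : ∑ j, dft N k j * dft N j l =
      ((√N : ℝ) : ℂ)⁻¹ ^ 2 *
        ∑ j ∈ Finset.range N, (exp (-(2 * π * I / N)) ^ ((k : ℕ) + l)) ^ j := by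
    rw [Finset.mul_sum, ← Fin.sum_univ_eq_sum_range]
    refine Finset.sum_congr rfl fun j _ => ?_
    simp only [dft_apply_eq_pow, ← pow_mul]
    ring
  have hneg : -k = l ↔ N ∣ (k : ℕ) + l := by
    rw [neg_eq_iff_add_eq_zero, Fin.ext_iff, Fin.val_add, Fin.val_zero, Nat.dvd_iff_mod_eq_zero]
  rw [mul_apply, hsum, isPrimitiveRoot_exp_neg.geom_sum_pow_eq_ite]
  simp only [mul_ite, mul_zero, hscale, PEquiv.toMatrix_apply, Equiv.toPEquiv_apply,
    Equiv.neg_apply, Option.mem_some_iff, hneg]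

theorem dft_pow_four [NeZero N] : dft N ^ 4 = 1 := by
  rw [show 4 = 2 * 2 from rfl, pow_mul, dft_sq, sq, ← permMatrix_mul]
  convert permMatrix_one
  ext k
  simp

theorem dft_pow_three_apply [NeZero N] (k l : Fin N) : (dft N ^ 3) k l = dft N k (-l) := by
  rw [pow_succ', dft_sq, PEquiv.mul_toMatrix_toPEquiv]
  rfl

theorem dft_cubic_ne_zero (hN : 5 ≤ N) {μ : ℂ} (hμ : ‖μ‖ = 1) :
    dft N ^ 3 + μ • dft N ^ 2 + μ ^ 2 • dft N + μ ^ 3 • 1 ≠ 0 := by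
  have : NeZero N := ⟨by omega⟩
  have hone : (1 : Fin N) ≠ -1 := by
    rw [Ne, Fin.ext_iff, Fin.val_neg', Fin.val_one', Nat.mod_eq_of_lt (by omega),
      Nat.mod_eq_of_lt (by omega)]
    omega
  have hsqrt : 2 < √N := by
    rw [Real.lt_sqrt zero_le_two]
    exact_mod_cast (show 2 ^ 2 < N by omega)
  intro h
  have hentry := congrFun (congrFun h 1) (-1)
  simp only [Matrix.add_apply, Matrix.smul_apply, smul_eq_mul, dft_pow_three_apply, dft_sq,
    PEquiv.toMatrix_apply, Equiv.toPEquiv_apply, Option.mem_some_iff, Equiv.neg_apply, neg_neg,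
    one_apply_ne hone, if_true, mul_one, mul_zero, add_zero, Matrix.zero_apply] at hentry
  have hμ_eq : μ = -dft N 1 1 - μ ^ 2 * dft N 1 (-1) := by linear_combination hentry
  refine lt_irrefl (1 : ℝ) ?_
  calc
    1 = ‖μ‖ := hμ.symm
    _ = ‖-dft N 1 1 - μ ^ 2 * dft N 1 (-1)‖ := congrArg norm hμ_eq
    _ ≤ ‖-dft N 1 1‖ + ‖μ ^ 2 * dft N 1 (-1)‖ := norm_sub_le _ _
    _ = 2 * (√N)⁻¹ := by
      rw [norm_neg, norm_mul, norm_pow, hμ, norm_dft_apply, norm_dft_apply]; ring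
    _ < 1 := by rwa [← div_eq_mul_inv, div_lt_one (by positivity)]

end dft

theorem minpoly_dft {N : ℕ} (hN : 5 ≤ N) : minpoly ℂ (dft N) = X ^ 4 - 1 :=
  have : NeZero N := ⟨by omega⟩
  minpoly_eq_X_pow_four_sub_one isPrimitiveRoot_I dft_pow_four fun _ hμ =>
    dft_cubic_ne_zero hN (norm_eq_one_of_pow_eq_one hμ four_ne_zero)

theorem stmt15 (n : ℕ) (hn : 3 ≤ n) :
    minpoly ℂ (dft (2 ^ n)) = X ^ 4 - 1 :=
  minpoly_dft ((by norm_num : 5 ≤ 2 ^ 3).trans (Nat.pow_le_pow_right two_pos hn))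
end

section
/- Let U be an n×n complex unitary matrix with U⁴ = 1, and let x ∈ ℝ. Define α₀(x) = (1/2)·(1 + e^{ix})·cos x, α₁(x) = (1/2)·(1 − i·e^{ix})·sin x, α₂(x) = (1/2)·(−1 + e^{ix})·cos x, and α₃(x) = (1/2)·(−1 − i·e^{ix})·sin x. Then the matrix α₀(x)·1 + α₁(x)·U + α₂(x)·U² + α₃(x)·U³ is unitary. -/
open Matrix

theorem stmt16 {n : ℕ}
    (U : Matrix (Fin n) (Fin n) ℂ)
    (hU : U * Uᴴ = 1 ∧ Uᴴ * U = 1)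
    (hU4 : U ^ 4 = 1)
    (x : ℝ)
    (V : Matrix (Fin n) (Fin n) ℂ)
    (hV : V =
      ((1 / 2 : ℂ) * (1 + Complex.exp (Complex.I * x)) * Real.cos x) •
          (1 : Matrix (Fin n) (Fin n) ℂ) +
        ((1 / 2 : ℂ) * (1 - Complex.I * Complex.exp (Complex.I * x)) * Real.sin x) • U +
        ((1 / 2 : ℂ) * (-1 + Complex.exp (Complex.I * x)) * Real.cos x) • U ^ 2 +
        ((1 / 2 : ℂ) * (-1 - Complex.I * Complex.exp (Complex.I * x)) * Real.sin x) • U ^ 3) :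
    V * Vᴴ = 1 ∧ Vᴴ * V = 1 := by
  set c : ℂ := (Real.cos x : ℂ) with hc
  set s : ℂ := (Real.sin x : ℂ) with hs
  have he : Complex.exp (Complex.I * x) = c + s * Complex.I := by
    rw [mul_comm, Complex.exp_mul_I, hc, hs, Complex.ofReal_cos, Complex.ofReal_sin]
  have hsc : c ^ 2 + s ^ 2 = 1 := by
    rw [hc, hs]
    push_cast
    exact_mod_cast Complex.ofReal_inj.mpr (by nlinarith [Real.sin_sq_add_cos_sq x])
  have hI : Complex.I ^ 2 = -1 := Complex.I_sq
  have hcstar : starRingEnd ℂ c = c := by rw [hc]; exact Complex.conj_ofReal _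
  have hsstar : starRingEnd ℂ s = s := by rw [hs]; exact Complex.conj_ofReal _
  have hUH : Uᴴ = U ^ 3 := by
    have h1 : U ^ 3 * (U * Uᴴ) = Uᴴ := by
      rw [← mul_assoc, ← pow_succ, hU4, one_mul]
    rw [hU.1, mul_one] at h1
    exact h1.symm
  have p11 : U * U = U ^ 2 := (sq U).symm
  have p12 : U * U ^ 2 = U ^ 3 := by rw [← pow_succ']
  have p13 : U * U ^ 3 = 1 := by rw [← pow_succ', hU4]
  have p21 : U ^ 2 * U = U ^ 3 := by rw [← pow_succ]
  have p22 : U ^ 2 * U ^ 2 = 1 := by rw [← pow_add]; exact hU4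
  have p23 : U ^ 2 * U ^ 3 = U := by
    rw [← pow_add, show (2 + 3 : ℕ) = 4 + 1 from rfl, pow_add, hU4, one_mul, pow_one]
  have p31 : U ^ 3 * U = 1 := by rw [← pow_succ, hU4]
  have p32 : U ^ 3 * U ^ 2 = U := by
    rw [← pow_add, show (3 + 2 : ℕ) = 4 + 1 from rfl, pow_add, hU4, one_mul, pow_one]
  have p33 : U ^ 3 * U ^ 3 = U ^ 2 := by
    rw [← pow_add, show (3 + 3 : ℕ) = 4 + 2 from rfl, pow_add, hU4, one_mul]
  have hVH : Vᴴ =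
      (starRingEnd ℂ ((1 / 2 : ℂ) * (1 + Complex.exp (Complex.I * x)) * c)) • (1 : Matrix (Fin n) (Fin n) ℂ) +
        (starRingEnd ℂ ((1 / 2 : ℂ) * (1 - Complex.I * Complex.exp (Complex.I * x)) * s)) • U ^ 3 +
        (starRingEnd ℂ ((1 / 2 : ℂ) * (-1 + Complex.exp (Complex.I * x)) * c)) • U ^ 2 +
        (starRingEnd ℂ ((1 / 2 : ℂ) * (-1 - Complex.I * Complex.exp (Complex.I * x)) * s)) • U := by
    rw [hV]
    simp only [conjTranspose_add, conjTranspose_smul, conjTranspose_one, conjTranspose_pow, hUH,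
      RCLike.star_def, ← pow_mul]
    norm_num
    rw [show U ^ 6 = U ^ 2 from by rw [show (6:ℕ) = 4 + 2 from rfl, pow_add, hU4, one_mul],
      show U ^ 9 = U from by rw [show (9:ℕ) = 4 + 4 + 1 from rfl, pow_add, pow_add, hU4, one_mul, one_mul, pow_one]]
  rw [hVH, hV]
  constructor <;>
  · simp only [he, _root_.map_mul, _root_.map_add, _root_.map_sub, _root_.map_one, _root_.map_neg, Complex.conj_I,
      Complex.conj_ofReal, ← hc, ← hs, map_div₀, map_ofNat,
      RingHom.map_one]
    simp only [add_mul, mul_add, smul_mul_assoc, mul_smul_comm, smul_smul, one_mul, mul_one,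
      p11, p12, p13, p21, p22, p23, p31, p32, p33]
    simp only [hcstar, hsstar] at *
    match_scalars
    · linear_combination (1/2*(c^2+s^2)+1)*hsc + (-(c^2*s^2) + 1/2*s^4*Complex.I^2 - 1/2*s^4)*hI
    · linear_combination (0:ℂ)*hsc
    · linear_combination (1/2*(c^2+s^2))*hsc + (-(c^2*s^2) + 1/2*s^4*Complex.I^2 - 1/2*s^4)*hI
    · linear_combination (0:ℂ)*hsc
end
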